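/- Consider the Normal location family F_θ(x) := Φ((x − θ)/s) for a known scale s > 0 and location parameter θ ∈ ℝ, where Φ is the standard Normal distribution function with density φ(t) = e^{−t²/2}/√(2π). Fix λ ∈ (0,1) and θ_0 ∈ ℝ, and let h_{λ,θ_0}(θ) := F_{θ_0}(F_θ^{−1}(λ)). Then the second derivative at θ = θ_0 of the rate function I_{λ,θ_0}(θ) := H(λ|h_{λ,θ_0}(θ)) equals I_{λ,θ_0}″(θ_0) = (φ(Φ^{−1}(λ)))²/(s²λ(1−λ)); in particular I_{1/2,θ_0}″(θ_0) = 2/(πs²). Moreover the Cramér rate function of the sample mean, J_{θ_0}(θ) := sup_{γ∈ℝ}{γθ − (γθ_0 + γ²s²/2)} = (θ − θ_0)²/(2s²), satisfies J_{θ_0}″(θ_0) = 1/s² > 2/(πs²) = I_{1/2,θ_0}″(θ_0). -/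

import Mathlib

open Set MeasureTheory

/-- Relative entropy `H(p|q)` of the Bernoulli(`p`) law w.r.t. the Bernoulli(`q`) law. -/
noncomputable def relEntBer (p q : ℝ) : ℝ :=
  p * Real.log (p / q) + (1 - p) * Real.log ((1 - p) / (1 - q))

/-!
The rate function `I(θ) = H(λ | h(θ))` is `q ↦ H(λ|q)` composed with `h`, and `h(θ₀) = λ` is
the minimum of `q ↦ H(λ|q)`, where its first derivative `(q - λ)/(q(1 - q))` vanishes and its
second derivative is `1/(λ(1 - λ))`. So only one term of the chain rule survives:
`I''(θ₀) = h'(θ₀)² / (λ(1 - λ))`, and `h'(θ₀) = φ(Φ⁻¹(λ))/s`. At `λ = 1/2` the symmetry of `φ`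
gives `Φ⁻¹(1/2) = 0`, and `φ(0)² = 1/(2π)`. The Cramér rate function is a Legendre transform
of a quadratic, computed by completing the square; the comparison is `π > 2`.
-/

open ProbabilityTheory

section DistributionFunction

variable {ρ : ℝ → ℝ}

theorem hasDerivAt_integral_Iic (hρ : Continuous ρ) (hint : Integrable ρ) (x : ℝ) :
    HasDerivAt (fun y => ∫ t in Iic y, ρ t) (ρ x) x := by
  have hsplit : ∀ y, ∫ t in Iic y, ρ t = (∫ t in Iic 0, ρ t) + ∫ t in (0 : ℝ)..y, ρ t := by
    intro y
    rw [← intervalIntegral.integral_Iic_sub_Iic hint.integrableOn hint.integrableOn]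
    ring
  rw [show (fun y => ∫ t in Iic y, ρ t) = _ from funext hsplit]
  exact (intervalIntegral.integral_hasDerivAt_right hint.intervalIntegrable
    (hρ.stronglyMeasurableAtFilter _ _) hρ.continuousAt).const_add _

theorem strictMono_integral_Iic (hρ : Continuous ρ) (hint : Integrable ρ) (hpos : ∀ t, 0 < ρ t) :
    StrictMono fun x => ∫ t in Iic x, ρ t :=
  strictMono_of_hasDerivAt_pos (hasDerivAt_integral_Iic hρ hint) hpos

theorem integral_Iic_mem_Ioo (hρ : Continuous ρ) (hint : Integrable ρ) (hpos : ∀ t, 0 < ρ t)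
    (hone : ∫ t, ρ t = 1) (x : ℝ) : ∫ t in Iic x, ρ t ∈ Ioo 0 1 := by
  have hmono := strictMono_integral_Iic hρ hint hpos
  have hnonneg : 0 ≤ ∫ t in Iic (x - 1), ρ t :=
    setIntegral_nonneg measurableSet_Iic fun t _ => (hpos t).le
  have hle : ∫ t in Iic (x + 1), ρ t ≤ 1 :=
    hone ▸ setIntegral_le_integral hint (Filter.Eventually.of_forall fun t => (hpos t).le)
  exact ⟨hnonneg.trans_lt (hmono (sub_one_lt x)), (hmono (lt_add_one x)).trans_le hle⟩

theorem integral_Iic_zero_of_even (hint : Integrable ρ) (heven : ∀ t, ρ (-t) = ρ t)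
    (hone : ∫ t, ρ t = 1) : ∫ t in Iic 0, ρ t = 1 / 2 := by
  have hsplit := intervalIntegral.integral_Iic_add_Ioi (b := 0) hint.integrableOn hint.integrableOn
  have hsymm : ∫ t in Ioi 0, ρ t = ∫ t in Iic 0, ρ t := by
    simpa [heven] using integral_comp_neg_Ioi 0 ρ
  linarith

end DistributionFunction

theorem gaussianPDFReal_zero_one (t : ℝ) :
    gaussianPDFReal 0 1 t = Real.exp (-t ^ 2 / 2) / Real.sqrt (2 * Real.pi) := by
  simp [gaussianPDFReal, div_eq_inv_mul]

noncomputable def relEntBerDeriv (p q : ℝ) : ℝ := (q - p) / (q * (1 - q))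

theorem hasDerivAt_relEntBer {p q : ℝ} (hp : p ∈ Ioo 0 1) (hq : q ∈ Ioo 0 1) :
    HasDerivAt (relEntBer p) (relEntBerDeriv p q) q := by
  obtain ⟨hp0, hp1⟩ := hp
  obtain ⟨hq0, hq1⟩ := hq
  have hlog₁ := ((hasDerivAt_const q p).fun_div (hasDerivAt_id' q) hq0.ne').log
    (div_pos hp0 hq0).ne'
  have hlog₂ := ((hasDerivAt_const q (1 - p)).fun_div
    ((hasDerivAt_const q 1).fun_sub (hasDerivAt_id' q)) (sub_pos.2 hq1).ne').log
    (div_pos (sub_pos.2 hp1) (sub_pos.2 hq1)).ne'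
  refine ((hlog₁.const_mul p).fun_add (hlog₂.const_mul (1 - p))).congr_deriv ?_
  rw [relEntBerDeriv]
  field_simp
  ring

theorem hasDerivAt_relEntBerDeriv_self {p : ℝ} (hp0 : p ≠ 0) (hp1 : p ≠ 1) :
    HasDerivAt (relEntBerDeriv p) (p * (1 - p))⁻¹ p := by
  have hden : p * (1 - p) ≠ 0 := mul_ne_zero hp0 (sub_ne_zero.2 (Ne.symm hp1))
  have hdenom := (hasDerivAt_id' p).fun_mul ((hasDerivAt_const p 1).fun_sub (hasDerivAt_id' p))
  refine (((hasDerivAt_id' p).sub_const p).fun_div hdenom hden).congr_deriv ?_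
  field_simp
  ring

theorem deriv_deriv_comp_of_deriv_eq_zero {f f' u u' : ℝ → ℝ} {x a : ℝ}
    (hf : ∀ y, HasDerivAt f (f' (u y)) (u y)) (hu : ∀ y, HasDerivAt u (u' y) y)
    (hf' : HasDerivAt f' a (u x)) (hu' : DifferentiableAt ℝ u' x) (hcrit : f' (u x) = 0) :
    deriv (deriv fun y => f (u y)) x = a * u' x ^ 2 := by
  have hderiv : (deriv fun y => f (u y)) = fun y => f' (u y) * u' y :=
    funext fun y => ((hf y).comp y (hu y)).deriv
  rw [hderiv]
  refine ((hf'.comp x (hu x)).fun_mul hu'.hasDerivAt).deriv.trans ?_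
  simp only [Function.comp, hcrit]
  ring

theorem deriv_deriv_relEntBer_location {G g : ℝ → ℝ} (hG : ∀ x, HasDerivAt G (g x) x)
    (hg : Differentiable ℝ g) (hGmem : ∀ x, G x ∈ Ioo 0 1) {s θ₀ c l : ℝ} (hs : s ≠ 0)
    (hc : G c = l) :
    deriv (deriv fun θ => relEntBer l (G ((θ + s * c - θ₀) / s))) θ₀ =
      g c ^ 2 / (s ^ 2 * l * (1 - l)) := by
  subst hc
  set u : ℝ → ℝ := fun θ => (θ + s * c - θ₀) / s
  have hu : ∀ θ, HasDerivAt u s⁻¹ θ := fun θ => by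
    simpa [u, div_eq_mul_inv] using (((hasDerivAt_id θ).add_const (s * c)).sub_const θ₀).div_const s
  have huθ₀ : u θ₀ = c := by simp only [u]; field_simp; ring
  have hGc := hGmem c
  rw [deriv_deriv_comp_of_deriv_eq_zero (f' := relEntBerDeriv (G c)) (u' := fun θ => g (u θ) * s⁻¹)
    (fun θ => hasDerivAt_relEntBer hGc (hGmem (u θ))) (fun θ => (hG (u θ)).comp θ (hu θ))
    (by rw [huθ₀]; exact hasDerivAt_relEntBerDeriv_self hGc.1.ne' hGc.2.ne)
    (by fun_prop) (by simp [huθ₀, relEntBerDeriv])]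
  simp only [huθ₀]
  field_simp

theorem sSup_range_mul_sub_gaussian_cgf {s : ℝ} (hs : s ≠ 0) (θ₀ θ : ℝ) :
    sSup (range fun γ : ℝ => γ * θ - (γ * θ₀ + γ ^ 2 * s ^ 2 / 2)) =
      (θ - θ₀) ^ 2 / (2 * s ^ 2) := by
  refine IsGreatest.csSup_eq ⟨⟨(θ - θ₀) / s ^ 2, ?_⟩, ?_⟩
  · field_simp
    ring
  · rintro _ ⟨γ, rfl⟩
    have hsquare : (θ - θ₀) ^ 2 / (2 * s ^ 2) - (γ * θ - (γ * θ₀ + γ ^ 2 * s ^ 2 / 2))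
        = (γ * s ^ 2 - (θ - θ₀)) ^ 2 / (2 * s ^ 2) := by
      field_simp
      ring
    rw [← sub_nonneg, hsquare]
    positivity

theorem deriv_deriv_sq_sub_div (a c x : ℝ) :
    deriv (deriv fun y => (y - a) ^ 2 / c) x = 2 / c := by
  have hderiv : (deriv fun y => (y - a) ^ 2 / c) = fun y => 2 * (y - a) / c := by
    funext y
    simp
  rw [hderiv]
  simp

theorem stmt_17_general (s θ₀ : ℝ) (hs : 0 < s)
    (lam : ℝ) (hlam : lam ∈ Set.Ioo (0 : ℝ) 1)
    (φ : ℝ → ℝ) (hφ : ∀ t, φ t = Real.exp (-t ^ 2 / 2) / Real.sqrt (2 * Real.pi))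
    (Φ : ℝ → ℝ) (hΦ : ∀ x, Φ x = ∫ t in Set.Iic x, φ t)
    (Φinv : ℝ → ℝ) (hΦinv : ∀ l ∈ Set.Ioo (0 : ℝ) 1, Φ (Φinv l) = l)
    -- `h l θ = F_{θ₀}(F_θ^{-1}(l)) = Φ((θ + sΦ^{-1}(l) − θ₀)/s)`
    (h : ℝ → ℝ → ℝ) (hh : ∀ l θ, h l θ = Φ ((θ + s * Φinv l - θ₀) / s))
    -- `curv l = I_{l,θ₀}''(θ₀)` where `I_{l,θ₀}(θ) = H(l | h_{l,θ₀}(θ))`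
    (curv : ℝ → ℝ)
    (hcurv : ∀ l, curv l = deriv (deriv fun θ => relEntBer l (h l θ)) θ₀)
    -- Cramér rate function of the sample mean of Normal(`θ₀`, `s²`) random variables
    (J : ℝ → ℝ)
    (hJ : ∀ θ, J θ = sSup (Set.range fun γ : ℝ => γ * θ - (γ * θ₀ + γ ^ 2 * s ^ 2 / 2))) :
    curv lam = (φ (Φinv lam)) ^ 2 / (s ^ 2 * lam * (1 - lam)) ∧
    curv (1 / 2) = 2 / (Real.pi * s ^ 2) ∧
    (∀ θ, J θ = (θ - θ₀) ^ 2 / (2 * s ^ 2)) ∧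
    deriv (deriv J) θ₀ = 1 / s ^ 2 ∧
    2 / (Real.pi * s ^ 2) < 1 / s ^ 2 := by
  have hφ_gauss : φ = gaussianPDFReal 0 1 :=
    funext fun t => (hφ t).trans (gaussianPDFReal_zero_one t).symm
  have hφ_cont : Continuous φ := by rw [funext hφ]; fun_prop
  have hφ_int : Integrable φ := hφ_gauss ▸ integrable_gaussianPDFReal 0 1
  have hφ_pos : ∀ t, 0 < φ t := fun t => hφ_gauss ▸ gaussianPDFReal_pos 0 1 t one_ne_zero
  have hφ_one : ∫ t, φ t = 1 := hφ_gauss ▸ integral_gaussianPDFReal_eq_one 0 one_ne_zero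
  have hΦ_eq : Φ = fun x => ∫ t in Iic x, φ t := funext hΦ
  have hcurv_eq : ∀ l ∈ Ioo (0 : ℝ) 1, curv l = φ (Φinv l) ^ 2 / (s ^ 2 * l * (1 - l)) := by
    intro l hl
    rw [hcurv, funext (hh l), hΦ_eq]
    exact deriv_deriv_relEntBer_location (hasDerivAt_integral_Iic hφ_cont hφ_int)
      (by rw [funext hφ]; fun_prop) (integral_Iic_mem_Ioo hφ_cont hφ_int hφ_pos hφ_one) hs.ne'
      ((hΦ _).symm.trans (hΦinv l hl))
  have hΦ_zero : Φ 0 = 1 / 2 := by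
    rw [hΦ]
    exact integral_Iic_zero_of_even hφ_int (fun t => by simp [hφ]) hφ_one
  have hΦinv_half : Φinv (1 / 2) = 0 :=
    (hΦ_eq ▸ strictMono_integral_Iic hφ_cont hφ_int hφ_pos).injective
      ((hΦinv _ (by norm_num)).trans hΦ_zero.symm)
  have hJ_eq : ∀ θ, J θ = (θ - θ₀) ^ 2 / (2 * s ^ 2) :=
    fun θ => (hJ θ).trans (sSup_range_mul_sub_gaussian_cgf hs.ne' θ₀ θ)
  refine ⟨hcurv_eq lam hlam, ?_, hJ_eq, ?_, ?_⟩
  · rw [hcurv_eq _ (by norm_num), hΦinv_half, hφ, div_pow, Real.sq_sqrt (by positivity)]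
    field_simp
    norm_num
  · rw [funext hJ_eq, deriv_deriv_sq_sub_div]
    field_simp
  · rw [div_lt_div_iff₀ (by positivity) (by positivity)]
    nlinarith [Real.pi_gt_three, pow_pos hs 2]

/-- Normal location family `F_θ(x) = Φ((x−θ)/s)`: curvature of the method-of-quantiles
rate function at `θ₀` (equal to `2/(πs²)` at `λ = 1/2`), the Cramér rate function of the
sample mean `J_{θ₀}(θ) = (θ−θ₀)²/(2s²)`, and the comparison `J'' = 1/s² > 2/(πs²)`. -/
theorem stmt_17 (s θ₀ : ℝ) (hs : 0 < s)
    (lam : ℝ) (hlam : lam ∈ Set.Ioo (0 : ℝ) 1)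
    (φ : ℝ → ℝ) (hφ : ∀ t, φ t = Real.exp (-t ^ 2 / 2) / Real.sqrt (2 * Real.pi))
    (Φ : ℝ → ℝ) (hΦ : ∀ x, Φ x = ∫ t in Set.Iic x, φ t)
    (Φinv : ℝ → ℝ) (hΦinv : ∀ l ∈ Set.Ioo (0 : ℝ) 1, Φ (Φinv l) = l)
    (F : ℝ → ℝ → ℝ) (hF : ∀ θ x, F θ x = Φ ((x - θ) / s))
    -- `h l θ = F_{θ₀}(F_θ^{-1}(l)) = Φ((θ + sΦ^{-1}(l) − θ₀)/s)`
    (h : ℝ → ℝ → ℝ) (hh : ∀ l θ, h l θ = Φ ((θ + s * Φinv l - θ₀) / s))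
    -- `curv l = I_{l,θ₀}''(θ₀)` where `I_{l,θ₀}(θ) = H(l | h_{l,θ₀}(θ))`
    (curv : ℝ → ℝ)
    (hcurv : ∀ l, curv l = deriv (deriv fun θ => relEntBer l (h l θ)) θ₀)
    -- Cramér rate function of the sample mean of Normal(`θ₀`, `s²`) random variables
    (J : ℝ → ℝ)
    (hJ : ∀ θ, J θ = sSup (Set.range fun γ : ℝ => γ * θ - (γ * θ₀ + γ ^ 2 * s ^ 2 / 2))) :
    curv lam = (φ (Φinv lam)) ^ 2 / (s ^ 2 * lam * (1 - lam)) ∧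
    curv (1 / 2) = 2 / (Real.pi * s ^ 2) ∧
    (∀ θ, J θ = (θ - θ₀) ^ 2 / (2 * s ^ 2)) ∧
    deriv (deriv J) θ₀ = 1 / s ^ 2 ∧
    2 / (Real.pi * s ^ 2) < 1 / s ^ 2 :=
  stmt_17_general s θ₀ hs lam hlam φ hφ Φ hΦ Φinv hΦinv h hh curv hcurv J hJ
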